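/- In the exterior algebra Ω³ᴰ generated by θ₁, θ₂, θ₃ with relations θ₃∧θ₃ = 0, θ₃∧θ₁ = -θ₁∧θ₃, θ₃∧θ₂ = -θ₂∧θ₃ + 4hθ₁∧θ₃, θ₁∧θ₁ = 0, θ₁∧θ₂ = -θ₂∧θ₁ - 2hθ₂∧θ₃, θ₂∧θ₂ = 4hθ₂∧θ₁ + 8h²θ₂∧θ₃, the set {θ₂^α ∧ θ₁^β ∧ θ₃^γ : α,β,γ ∈ {0,1}} is a linear basis; in particular Ω³ᴰ has dimension 8, the classical dimension of the exterior algebra on 3 generators. -/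

import Mathlib

/-- Abbreviations for the generating 1-forms `θ₁, θ₂, θ₃`. -/
noncomputable def T1 : FreeAlgebra ℂ (Fin 3) := FreeAlgebra.ι ℂ 0
noncomputable def T2 : FreeAlgebra ℂ (Fin 3) := FreeAlgebra.ι ℂ 1
noncomputable def T3 : FreeAlgebra ℂ (Fin 3) := FreeAlgebra.ι ℂ 2

/-- The defining relations of the exterior algebra `Ω³ᴰ`. -/
inductive ORel (h : ℂ) : FreeAlgebra ℂ (Fin 3) → FreeAlgebra ℂ (Fin 3) → Prop
  | r33 : ORel h (T3 * T3) 0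
  | r31 : ORel h (T3 * T1) (-(T1 * T3))
  | r32 : ORel h (T3 * T2) (-(T2 * T3) + (4 * h) • (T1 * T3))
  | r11 : ORel h (T1 * T1) 0
  | r12 : ORel h (T1 * T2) (-(T2 * T1) - (2 * h) • (T2 * T3))
  | r22 : ORel h (T2 * T2) ((4 * h) • (T2 * T1) + (8 * h ^ 2) • (T2 * T3))

/-- The exterior algebra `Ω³ᴰ` of the 3-dimensional calculus on `SL_h(2)`. -/
abbrev Omega3D (h : ℂ) := RingQuot (ORel h)

noncomputable def θ1 (h : ℂ) : Omega3D h := RingQuot.mkAlgHom ℂ (ORel h) T1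
noncomputable def θ2 (h : ℂ) : Omega3D h := RingQuot.mkAlgHom ℂ (ORel h) T2
noncomputable def θ3 (h : ℂ) : Omega3D h := RingQuot.mkAlgHom ℂ (ORel h) T3

namespace Om3Aux

set_option linter.unnecessarySeqFocus false
set_option linter.unreachableTactic false
set_option linter.unusedTactic false

/-! ### An 8-dimensional representation -/

abbrev V := Fin 8 → ℂ

def f1 (h : ℂ) (v : V) : V := fun i =>
  match i with
  | 0 => 0 | 1 => 0 | 2 => v 0 | 3 => v 1
  | 4 => 0 | 5 => -2*h*v 4 | 6 => -v 4 | 7 => -v 5 + 2*h*v 6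

def f2 (h : ℂ) (v : V) : V := fun i =>
  match i with
  | 0 => 0 | 1 => 0 | 2 => 0 | 3 => 0
  | 4 => v 0 | 5 => v 1 + 8*h^2*v 4 | 6 => v 2 + 4*h*v 4 | 7 => v 3 + 4*h*v 5 - 8*h^2*v 6

def f3 (h : ℂ) (v : V) : V := fun i =>
  match i with
  | 0 => 0 | 1 => v 0 | 2 => 0 | 3 => -v 2 + 4*h*v 4
  | 4 => 0 | 5 => -v 4 | 6 => 0 | 7 => v 6

def L1 (h : ℂ) : V →ₗ[ℂ] V where
  toFun := f1 h
  map_add' := by intro v w; funext i; fin_cases i <;> simp [f1] <;> ring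
  map_smul' := by intro c v; funext i; fin_cases i <;> simp [f1] <;> ring

def L2 (h : ℂ) : V →ₗ[ℂ] V where
  toFun := f2 h
  map_add' := by intro v w; funext i; fin_cases i <;> simp [f2] <;> ring
  map_smul' := by intro c v; funext i; fin_cases i <;> simp [f2] <;> ring

def L3 (h : ℂ) : V →ₗ[ℂ] V where
  toFun := f3 h
  map_add' := by intro v w; funext i; fin_cases i <;> simp [f3] <;> ring
  map_smul' := by intro c v; funext i; fin_cases i <;> simp [f3] <;> ring

lemma rel33 (h : ℂ) : (L3 h : Module.End ℂ V) * L3 h = 0 := by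
  apply LinearMap.ext; intro v; funext i
  fin_cases i <;> simp [L3, f3] <;> ring

lemma rel31 (h : ℂ) : (L3 h : Module.End ℂ V) * L1 h = -(L1 h * L3 h) := by
  apply LinearMap.ext; intro v; funext i
  fin_cases i <;> simp [L1, L3, f1, f3] <;> ring

lemma rel32 (h : ℂ) :
    (L3 h : Module.End ℂ V) * L2 h = -(L2 h * L3 h) + (4*h) • (L1 h * L3 h) := by
  apply LinearMap.ext; intro v; funext i
  fin_cases i <;> simp [L1, L2, L3, f1, f2, f3] <;> ring

lemma rel11 (h : ℂ) : (L1 h : Module.End ℂ V) * L1 h = 0 := by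
  apply LinearMap.ext; intro v; funext i
  fin_cases i <;> simp [L1, f1] <;> ring

lemma rel12 (h : ℂ) :
    (L1 h : Module.End ℂ V) * L2 h = -(L2 h * L1 h) - (2*h) • (L2 h * L3 h) := by
  apply LinearMap.ext; intro v; funext i
  fin_cases i <;> simp [L1, L2, L3, f1, f2, f3] <;> ring

lemma rel22 (h : ℂ) :
    (L2 h : Module.End ℂ V) * L2 h = (4*h) • (L2 h * L1 h) + (8*h^2) • (L2 h * L3 h) := by
  apply LinearMap.ext; intro v; funext i
  fin_cases i <;> simp [L1, L2, L3, f1, f2, f3] <;> ring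

noncomputable def ρ (h : ℂ) : FreeAlgebra ℂ (Fin 3) →ₐ[ℂ] Module.End ℂ V :=
  FreeAlgebra.lift ℂ ![L1 h, L2 h, L3 h]

lemma ρT1 (h : ℂ) : ρ h T1 = L1 h := by simp [ρ, T1]
lemma ρT2 (h : ℂ) : ρ h T2 = L2 h := by simp [ρ, T2]
lemma ρT3 (h : ℂ) : ρ h T3 = L3 h := by simp [ρ, T3]

lemma ρ_rel (h : ℂ) : ∀ ⦃x y⦄, ORel h x y → ρ h x = ρ h y := by
  intro x y r
  rcases r with _ | _ | _ | _ | _ | _ <;>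
    simp only [map_mul, map_add, map_sub, map_neg, map_smul, map_zero, ρT1, ρT2, ρT3,
      rel33, rel31, rel32, rel11, rel12, rel22]

noncomputable def ρq (h : ℂ) : Omega3D h →ₐ[ℂ] Module.End ℂ V :=
  RingQuot.liftAlgHom ℂ ⟨ρ h, ρ_rel h⟩

lemma ρqθ1 (h : ℂ) : ρq h (θ1 h) = L1 h := by
  rw [θ1, ρq, RingQuot.liftAlgHom_mkAlgHom_apply]; exact ρT1 h
lemma ρqθ2 (h : ℂ) : ρq h (θ2 h) = L2 h := by
  rw [θ2, ρq, RingQuot.liftAlgHom_mkAlgHom_apply]; exact ρT2 h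
lemma ρqθ3 (h : ℂ) : ρq h (θ3 h) = L3 h := by
  rw [θ3, ρq, RingQuot.liftAlgHom_mkAlgHom_apply]; exact ρT3 h

/-- Evaluation of the representation on the vector `e₀`. -/
noncomputable def φ (h : ℂ) : Omega3D h →ₗ[ℂ] V where
  toFun := fun x => ρq h x (Pi.single 0 1)
  map_add' := by intro x y; simp [map_add]
  map_smul' := by intro c x; simp [map_smul]

/-- The index of the monomial `θ₂^α θ₁^β θ₃^γ` in the basis of `V`. -/
def idx (p : Fin 2 × Fin 2 × Fin 2) : Fin 8 :=
  ⟨4 * p.1.val + 2 * p.2.1.val + p.2.2.val, by omega⟩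

lemma idx_inj : Function.Injective idx := by decide

/-- The monomial family appearing in the statement. -/
noncomputable def vfam (h : ℂ) (p : Fin 2 × Fin 2 × Fin 2) : Omega3D h :=
  θ2 h ^ (p.1 : ℕ) * θ1 h ^ (p.2.1 : ℕ) * θ3 h ^ (p.2.2 : ℕ)

lemma φ_vfam (h : ℂ) (p : Fin 2 × Fin 2 × Fin 2) :
    φ h (vfam h p) = Pi.single (idx p) 1 := by
  fin_cases p <;>
    (funext i; fin_cases i <;>
      simp (config := { decide := true }) [vfam, φ, idx, map_mul, ρqθ1, ρqθ2, ρqθ3,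
        Module.End.mul_apply, L1, L2, L3, f1, f2, f3, Pi.single_apply])

lemma li (h : ℂ) : LinearIndependent ℂ (vfam h) := by
  apply LinearIndependent.of_comp (φ h)
  have h1 : LinearIndependent ℂ (fun p : Fin 2 × Fin 2 × Fin 2 => (Pi.single (idx p) 1 : V)) := by
    have h2 := (Pi.basisFun ℂ (Fin 8)).linearIndependent.comp idx idx_inj
    have h3 : (⇑(Pi.basisFun ℂ (Fin 8)) ∘ idx) =
        (fun p : Fin 2 × Fin 2 × Fin 2 => (Pi.single (idx p) 1 : V)) :=
      funext fun p => by simp [Function.comp]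
    rwa [h3] at h2
  have : (φ h) ∘ (vfam h) = fun p => (Pi.single (idx p) 1 : V) := funext (φ_vfam h)
  rw [this]; exact h1

/-! ### Relations in the quotient -/

lemma E33 (h : ℂ) : θ3 h * θ3 h = 0 := by
  have := RingQuot.mkAlgHom_rel ℂ (ORel.r33 (h := h))
  simpa [θ3, map_mul] using this

lemma E31 (h : ℂ) : θ3 h * θ1 h = -(θ1 h * θ3 h) := by
  have := RingQuot.mkAlgHom_rel ℂ (ORel.r31 (h := h))
  simpa [θ1, θ3, map_mul] using this

lemma E32 (h : ℂ) : θ3 h * θ2 h = -(θ2 h * θ3 h) + (4 * h) • (θ1 h * θ3 h) := by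
  have := RingQuot.mkAlgHom_rel ℂ (ORel.r32 (h := h))
  simpa [θ1, θ2, θ3, map_mul, map_add, map_smul] using this

lemma E11 (h : ℂ) : θ1 h * θ1 h = 0 := by
  have := RingQuot.mkAlgHom_rel ℂ (ORel.r11 (h := h))
  simpa [θ1, map_mul] using this

lemma E12 (h : ℂ) : θ1 h * θ2 h = -(θ2 h * θ1 h) - (2 * h) • (θ2 h * θ3 h) := by
  have := RingQuot.mkAlgHom_rel ℂ (ORel.r12 (h := h))
  simpa [θ1, θ2, θ3, map_mul, map_sub, map_smul] using this

lemma E22 (h : ℂ) : θ2 h * θ2 h = (4 * h) • (θ2 h * θ1 h) + (8 * h ^ 2) • (θ2 h * θ3 h) := by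
  have := RingQuot.mkAlgHom_rel ℂ (ORel.r22 (h := h))
  simpa [θ1, θ2, θ3, map_mul, map_add, map_smul] using this


/-! ### Instance-specialized rewriting lemmas (to avoid `RingQuot` instance mismatches) -/

section OLemmas
variable (h : ℂ)

lemma Oneg_mul (a b : Omega3D h) : -a * b = -(a * b) := neg_mul a b
lemma Omul_neg (a b : Omega3D h) : a * -b = -(a * b) := mul_neg a b
lemma Oadd_mul (a b c : Omega3D h) : (a + b) * c = a * c + b * c := add_mul a b c
lemma Omul_add (a b c : Omega3D h) : a * (b + c) = a * b + a * c := mul_add a b c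
lemma Osub_mul (a b c : Omega3D h) : (a - b) * c = a * c - b * c := sub_mul a b c
lemma Omul_sub (a b c : Omega3D h) : a * (b - c) = a * b - a * c := mul_sub a b c
lemma Osmul_mul (c : ℂ) (a b : Omega3D h) : c • a * b = c • (a * b) := smul_mul_assoc c a b
lemma Omul_smul (c : ℂ) (a b : Omega3D h) : a * c • b = c • (a * b) := mul_smul_comm c a b
lemma Ozero_mul (a : Omega3D h) : 0 * a = 0 := zero_mul a
lemma Omul_zero (a : Omega3D h) : a * 0 = 0 := mul_zero a
lemma Oone_mul (a : Omega3D h) : 1 * a = a := one_mul a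
lemma Omul_one (a : Omega3D h) : a * 1 = a := mul_one a
lemma Osmul_neg (c : ℂ) (a : Omega3D h) : c • -a = -(c • a) := smul_neg c a
lemma Osmul_zero (c : ℂ) : c • (0 : Omega3D h) = 0 := smul_zero c
lemma Osmul_smul (c d : ℂ) (a : Omega3D h) : c • d • a = (c * d) • a := smul_smul c d a
lemma Oneg_neg (a : Omega3D h) : - -a = a := neg_neg a
lemma Oneg_zero : -(0 : Omega3D h) = 0 := neg_zero
lemma Oadd_zero (a : Omega3D h) : a + 0 = a := add_zero a
lemma Ozero_add (a : Omega3D h) : 0 + a = a := zero_add a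
lemma Osub_zero (a : Omega3D h) : a - 0 = a := sub_zero a
lemma Ozero_sub (a : Omega3D h) : 0 - a = -a := zero_sub a

end OLemmas

lemma E33' (h : ℂ) (x : Omega3D h) : θ3 h * (θ3 h * x) = 0 := by
  rw [← mul_assoc, E33, Ozero_mul]

lemma E31' (h : ℂ) (x : Omega3D h) : θ3 h * (θ1 h * x) = -(θ1 h * (θ3 h * x)) := by
  rw [← mul_assoc, E31, Oneg_mul, mul_assoc]

lemma E32' (h : ℂ) (x : Omega3D h) :
    θ3 h * (θ2 h * x) = -(θ2 h * (θ3 h * x)) + (4 * h) • (θ1 h * (θ3 h * x)) := by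
  rw [← mul_assoc, E32, Oadd_mul, Oneg_mul, Osmul_mul, mul_assoc, mul_assoc]

lemma E11' (h : ℂ) (x : Omega3D h) : θ1 h * (θ1 h * x) = 0 := by
  rw [← mul_assoc, E11, Ozero_mul]

lemma E12' (h : ℂ) (x : Omega3D h) :
    θ1 h * (θ2 h * x) = -(θ2 h * (θ1 h * x)) - (2 * h) • (θ2 h * (θ3 h * x)) := by
  rw [← mul_assoc, E12, Osub_mul, Oneg_mul, Osmul_mul, mul_assoc, mul_assoc]

lemma E22' (h : ℂ) (x : Omega3D h) :
    θ2 h * (θ2 h * x) = (4 * h) • (θ2 h * (θ1 h * x)) + (8 * h ^ 2) • (θ2 h * (θ3 h * x)) := by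
  rw [← mul_assoc, E22, Oadd_mul, Osmul_mul, Osmul_mul, mul_assoc, mul_assoc]

/-! ### Spanning -/

noncomputable def S (h : ℂ) : Submodule ℂ (Omega3D h) :=
  Submodule.span ℂ (Set.range (vfam h))

lemma mem_one (h : ℂ) : (1 : Omega3D h) ∈ S h :=
  Submodule.subset_span ⟨(0, 0, 0), by simp [vfam]⟩

lemma mem_c (h : ℂ) : θ3 h ∈ S h :=
  Submodule.subset_span ⟨(0, 0, 1), by simp [vfam]⟩

lemma mem_b (h : ℂ) : θ1 h ∈ S h :=
  Submodule.subset_span ⟨(0, 1, 0), by simp [vfam]⟩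

lemma mem_bc (h : ℂ) : θ1 h * θ3 h ∈ S h :=
  Submodule.subset_span ⟨(0, 1, 1), by simp [vfam]⟩

lemma mem_a (h : ℂ) : θ2 h ∈ S h :=
  Submodule.subset_span ⟨(1, 0, 0), by simp [vfam]⟩

lemma mem_ac (h : ℂ) : θ2 h * θ3 h ∈ S h :=
  Submodule.subset_span ⟨(1, 0, 1), by simp [vfam]⟩

lemma mem_ab (h : ℂ) : θ2 h * θ1 h ∈ S h :=
  Submodule.subset_span ⟨(1, 1, 0), by simp [vfam]⟩

lemma mem_abc (h : ℂ) : θ2 h * (θ1 h * θ3 h) ∈ S h :=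
  Submodule.subset_span ⟨(1, 1, 1), by simp [vfam, mul_assoc]⟩

lemma mull (h : ℂ) (t : Omega3D h)
    (ht : ∀ p : Fin 2 × Fin 2 × Fin 2, t * vfam h p ∈ S h) :
    ∀ y ∈ S h, t * y ∈ S h := by
  intro y hy
  induction hy using Submodule.span_induction with
  | mem x hx => obtain ⟨p, rfl⟩ := hx; exact ht p
  | zero => rw [Omul_zero]; exact (S h).zero_mem
  | add x y _ _ hx hy => rw [Omul_add]; exact (S h).add_mem hx hy
  | smul c x _ hx => rw [Omul_smul]; exact (S h).smul_mem c hx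

lemma mull1 (h : ℂ) : ∀ y ∈ S h, θ1 h * y ∈ S h := by
  apply mull
  intro p
  fin_cases p <;>
    simp only [vfam, Fin.isValue, Fin.val_zero, Fin.val_one, pow_zero, pow_one,
      Oone_mul, Omul_one, one_mul, mul_one, mul_assoc, E33, E31, E32, E11, E12, E22,
      E33', E31', E32', E11', E12', E22', Oneg_mul, Omul_neg, Oadd_mul, Omul_add,
      Osub_mul, Omul_sub, Osmul_mul, Omul_smul, Ozero_mul, Omul_zero, Osmul_neg,
      Osmul_zero, Osmul_smul, Oneg_neg, Oneg_zero, Oadd_zero, Ozero_add, Osub_zero,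
      Ozero_sub] <;>
    first
      | exact (S h).zero_mem
      | exact mem_one h | exact mem_c h | exact mem_b h | exact mem_bc h
      | exact mem_a h | exact mem_ac h | exact mem_ab h | exact mem_abc h
      | exact (S h).neg_mem (mem_abc h)
      | exact (S h).neg_mem (mem_bc h)
      | exact (S h).neg_mem (mem_ac h)
      | exact (S h).neg_mem (mem_ab h)
      | exact (S h).smul_mem _ (mem_abc h)
      | exact (S h).neg_mem ((S h).smul_mem _ (mem_abc h))
      | exact (S h).sub_mem ((S h).neg_mem (mem_ab h)) ((S h).smul_mem _ (mem_ac h))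
      | exact (S h).add_mem ((S h).neg_mem (mem_ac h)) ((S h).smul_mem _ (mem_bc h))
      | exact (S h).add_mem ((S h).smul_mem _ (mem_ab h)) ((S h).smul_mem _ (mem_ac h))

lemma mull2 (h : ℂ) : ∀ y ∈ S h, θ2 h * y ∈ S h := by
  apply mull
  intro p
  fin_cases p <;>
    simp only [vfam, Fin.isValue, Fin.val_zero, Fin.val_one, pow_zero, pow_one,
      Oone_mul, Omul_one, one_mul, mul_one, mul_assoc, E33, E31, E32, E11, E12, E22,
      E33', E31', E32', E11', E12', E22', Oneg_mul, Omul_neg, Oadd_mul, Omul_add,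
      Osub_mul, Omul_sub, Osmul_mul, Omul_smul, Ozero_mul, Omul_zero, Osmul_neg,
      Osmul_zero, Osmul_smul, Oneg_neg, Oneg_zero, Oadd_zero, Ozero_add, Osub_zero,
      Ozero_sub] <;>
    first
      | exact (S h).zero_mem
      | exact mem_one h | exact mem_c h | exact mem_b h | exact mem_bc h
      | exact mem_a h | exact mem_ac h | exact mem_ab h | exact mem_abc h
      | exact (S h).neg_mem (mem_abc h)
      | exact (S h).neg_mem (mem_bc h)
      | exact (S h).neg_mem (mem_ac h)
      | exact (S h).neg_mem (mem_ab h)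
      | exact (S h).smul_mem _ (mem_abc h)
      | exact (S h).neg_mem ((S h).smul_mem _ (mem_abc h))
      | exact (S h).sub_mem ((S h).neg_mem (mem_ab h)) ((S h).smul_mem _ (mem_ac h))
      | exact (S h).add_mem ((S h).neg_mem (mem_ac h)) ((S h).smul_mem _ (mem_bc h))
      | exact (S h).add_mem ((S h).smul_mem _ (mem_ab h)) ((S h).smul_mem _ (mem_ac h))

lemma mull3 (h : ℂ) : ∀ y ∈ S h, θ3 h * y ∈ S h := by
  apply mull
  intro p
  fin_cases p <;>
    simp only [vfam, Fin.isValue, Fin.val_zero, Fin.val_one, pow_zero, pow_one,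
      Oone_mul, Omul_one, one_mul, mul_one, mul_assoc, E33, E31, E32, E11, E12, E22,
      E33', E31', E32', E11', E12', E22', Oneg_mul, Omul_neg, Oadd_mul, Omul_add,
      Osub_mul, Omul_sub, Osmul_mul, Omul_smul, Ozero_mul, Omul_zero, Osmul_neg,
      Osmul_zero, Osmul_smul, Oneg_neg, Oneg_zero, Oadd_zero, Ozero_add, Osub_zero,
      Ozero_sub] <;>
    first
      | exact (S h).zero_mem
      | exact mem_one h | exact mem_c h | exact mem_b h | exact mem_bc h
      | exact mem_a h | exact mem_ac h | exact mem_ab h | exact mem_abc h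
      | exact (S h).neg_mem (mem_abc h)
      | exact (S h).neg_mem (mem_bc h)
      | exact (S h).neg_mem (mem_ac h)
      | exact (S h).neg_mem (mem_ab h)
      | exact (S h).smul_mem _ (mem_abc h)
      | exact (S h).neg_mem ((S h).smul_mem _ (mem_abc h))
      | exact (S h).sub_mem ((S h).neg_mem (mem_ab h)) ((S h).smul_mem _ (mem_ac h))
      | exact (S h).add_mem ((S h).neg_mem (mem_ac h)) ((S h).smul_mem _ (mem_bc h))
      | exact (S h).add_mem ((S h).smul_mem _ (mem_ab h)) ((S h).smul_mem _ (mem_ac h))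

lemma span_top (h : ℂ) : S h = ⊤ := by
  rw [Submodule.eq_top_iff']
  intro x
  obtain ⟨y, rfl⟩ := RingQuot.mkAlgHom_surjective ℂ (ORel h) x
  have key : ∀ z ∈ S h, RingQuot.mkAlgHom ℂ (ORel h) y * z ∈ S h := by
    induction y using FreeAlgebra.induction with
    | grade0 c =>
      intro z hz
      rw [AlgHom.commutes, ← Algebra.smul_def]
      exact (S h).smul_mem c hz
    | grade1 i =>
      fin_cases i
      · exact mull1 h
      · exact mull2 h
      · exact mull3 h
    | mul a b ha hb =>
      intro z hz
      rw [map_mul, mul_assoc]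
      exact ha _ (hb _ hz)
    | add a b ha hb =>
      intro z hz
      rw [map_add, add_mul]
      exact (S h).add_mem (ha z hz) (hb z hz)
  simpa using key 1 (mem_one h)

end Om3Aux

/-- The monomials `θ₂^α θ₁^β θ₃^γ` with `α,β,γ ∈ {0,1}` form a linear basis of `Ω³ᴰ`;
in particular `Ω³ᴰ` has dimension `8`, the classical dimension. -/
theorem Omega3D_basis (h : ℂ) :
    LinearIndependent ℂ (fun p : Fin 2 × Fin 2 × Fin 2 =>
      θ2 h ^ (p.1 : ℕ) * θ1 h ^ (p.2.1 : ℕ) * θ3 h ^ (p.2.2 : ℕ)) ∧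
    Submodule.span ℂ (Set.range (fun p : Fin 2 × Fin 2 × Fin 2 =>
      θ2 h ^ (p.1 : ℕ) * θ1 h ^ (p.2.1 : ℕ) * θ3 h ^ (p.2.2 : ℕ))) = ⊤ ∧
    Module.finrank ℂ (Omega3D h) = 8 := by
  have hli : LinearIndependent ℂ (Om3Aux.vfam h) := Om3Aux.li h
  have hsp : Submodule.span ℂ (Set.range (Om3Aux.vfam h)) = ⊤ := Om3Aux.span_top h
  refine ⟨hli, hsp, ?_⟩
  let b : Module.Basis (Fin 2 × Fin 2 × Fin 2) ℂ (Omega3D h) :=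
    Module.Basis.mk hli (le_of_eq hsp.symm)
  haveI : Module.Finite ℂ (Omega3D h) := Module.Finite.of_basis b
  rw [Module.finrank_eq_card_basis b]
  simp
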